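/- arXiv:1003.3723 — 2 statements merged into one kernel-verified Lean document; each statement's English description precedes it below -/
import Mathlib

section
/- Let n, m be positive integers and let f : [0,1]^n → ℝ^m be a Lipschitz map (with respect to the Euclidean metrics). If the image f([0,1]^n) has positive n-dimensional Hausdorff measure, then there exists a subset K ⊆ [0,1]^n with positive n-dimensional Hausdorff measure such that f is biLipschitz on K. -/
open MeasureTheory Metric Set Filter
open scoped ENNReal NNReal

noncomputable section

/-- The closed unit cube `[0,1]^n` in `ℝ^n` with the Euclidean metric. -/
def unitCube (n : ℕ) : Set (EuclideanSpace ℝ (Fin n)) :=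
  {x | ∀ i, x i ∈ Set.Icc (0:ℝ) 1}

/-- Hausdorff `d`-content: the infimum over countable covers `{U i}` of `S`
of `∑ i, (diam (U i))^d`. -/
def hContent {X : Type*} [PseudoEMetricSpace X] (d : ℝ) (S : Set X) : ℝ≥0∞ :=
  ⨅ (U : ℕ → Set X) (_ : S ⊆ ⋃ i, U i), ∑' i, EMetric.diam (U i) ^ d

/-- `F` is biLipschitz with constant `L` on `S`. -/
def BiLipschitzWithOn {X Y : Type*} [PseudoMetricSpace X] [PseudoMetricSpace Y]
    (L : ℝ) (F : X → Y) (S : Set X) : Prop :=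
  ∀ x ∈ S, ∀ y ∈ S, L⁻¹ * dist x y ≤ dist (F x) (F y) ∧ dist (F x) (F y) ≤ L * dist x y

/-- `F` is biLipschitz on `S`: for some `L ≥ 1`,
`L⁻¹ · dist x y ≤ dist (F x) (F y) ≤ L · dist x y` on `S`. -/
def BiLipschitzOn {X Y : Type*} [PseudoMetricSpace X] [PseudoMetricSpace Y]
    (F : X → Y) (S : Set X) : Prop :=
  ∃ L : ℝ, 1 ≤ L ∧ BiLipschitzWithOn L F S

open Function Module Topology

/-!
Extend `f` to a Lipschitz map `g` on `ℝⁿ`. By Rademacher's theorem `g` is differentiable off a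
null set, whose image is `μH[n]`-null. The image of the set where `Dg` is not injective is
`μH[n]`-null as well: where `g` is `δ`-close to a linear map of rank `k < n`, a cube of side `ρ` is
sent into `O(δ⁻ᵏ)` balls of radius `O(δρ)`, so the image has measure `O(δ)` times the volume.
Hence the set where `Dg` is injective has image of positive measure. It is covered by countably many
pieces on which `g` is `δ`-close to one injective linear map `A` with `δ` below the inverse of the
co-Lipschitz constant of `A`; on such a piece `g` is biLipschitz, and some piece has image, hence
itself, of positive measure.
-/

lemma LinearMap.finrank_range_lt_of_not_injective {K V W : Type*} [DivisionRing K]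
    [AddCommGroup V] [Module K V] [FiniteDimensional K V] [AddCommGroup W] [Module K W]
    {A : V →ₗ[K] W} (hA : ¬Injective A) : finrank K (LinearMap.range A) < finrank K V := by
  have hker : 0 < finrank K (LinearMap.ker A) :=
    Nat.pos_of_ne_zero fun h ↦ hA <| LinearMap.ker_eq_bot.1 <| Submodule.finrank_eq_zero.1 h
  have := A.finrank_range_add_finrank_ker
  omega

lemma natCast_two_mul_ceil_add_one_pow_mul_pow_le {a c δ : ℝ} (ha : 0 ≤ a) (hc : 0 ≤ c)
    (hδ : 0 < δ) (hδ1 : δ ≤ 1) {k n : ℕ} (hkn : k < n) :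
    (((2 * ⌈a / δ⌉₊ + 1) ^ k : ℕ) : ℝ) * (c * δ) ^ n ≤ ((2 * a + 3) * c) ^ n * δ := by
  set N := ⌈a / δ⌉₊
  have hN : ((2 * N + 1 : ℕ) : ℝ) * δ ≤ 2 * a + 3 := by
    have := Nat.ceil_lt_add_one (div_nonneg ha hδ.le)
    push_cast
    calc (2 * N + 1 : ℝ) * δ ≤ (2 * (a / δ + 1) + 1) * δ := by gcongr
      _ = 2 * a + 3 * δ := by field_simp; ring
      _ ≤ 2 * a + 3 := by linarith
  calc (((2 * N + 1) ^ k : ℕ) : ℝ) * (c * δ) ^ n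
      = (((2 * N + 1 : ℕ) : ℝ) * δ) ^ k * δ ^ (n - k) * c ^ n := by
        rw [mul_pow c, mul_pow _ δ, ← Nat.add_sub_cancel' hkn.le, pow_add δ,
          Nat.add_sub_cancel' hkn.le]
        push_cast
        ring
    _ ≤ (2 * a + 3) ^ k * δ * c ^ n := by
        gcongr
        exact pow_le_of_le_one hδ.le hδ1 (Nat.sub_ne_zero_of_lt hkn)
    _ ≤ (2 * a + 3) ^ n * δ * c ^ n := by
        gcongr
        linarith
    _ = ((2 * a + 3) * c) ^ n * δ := by rw [mul_pow]; ring

lemma measure_image_le_tsum_measure_image_inter {α β : Type*} [MeasurableSpace β] (μ : Measure β)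
    (g : α → β) {s : Set α} {t : ℕ → Set α} (hst : s ⊆ ⋃ i, t i) :
    μ (g '' s) ≤ ∑' i, μ (g '' (s ∩ t i)) := by
  refine (measure_mono ?_).trans (measure_iUnion_le _)
  rw [← image_iUnion, ← inter_iUnion]
  exact image_mono (subset_inter subset_rfl hst)

theorem hausdorffMeasure_le_of_forall_cover {X : Type*} [EMetricSpace X] [MeasurableSpace X]
    [BorelSpace X] {ι : ℝ → Type*} [∀ ρ, Countable (ι ρ)] (d : ℝ) {s : Set X} {B : ℝ≥0∞}
    (c : ℝ) (t : ∀ ρ, ι ρ → Set X) (hdiam : ∀ ρ > 0, ∀ i, ediam (t ρ i) ≤ ENNReal.ofReal (c * ρ))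
    (hcover : ∀ ρ > 0, s ⊆ ⋃ i, t ρ i) (hsum : ∀ᶠ ρ in 𝓝[>] 0, ∑' i, ediam (t ρ i) ^ d ≤ B) :
    μH[d] s ≤ B := by
  refine (Measure.hausdorffMeasure_le_liminf_tsum d s (fun ρ ↦ ENNReal.ofReal (c * ρ)) ?_ t
    (eventually_nhdsWithin_of_forall hdiam) (eventually_nhdsWithin_of_forall hcover)).trans
    (liminf_le_of_frequently_le' hsum.frequently)
  exact ENNReal.ofReal_zero ▸ (ENNReal.tendsto_ofReal
    ((continuous_const_mul c).tendsto' 0 0 (mul_zero c))).mono_left nhdsWithin_le_nhds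

lemma Metric.ediam_closedBall_le {X : Type*} [PseudoMetricSpace X] (x : X) (r : ℝ) :
    ediam (closedBall x r) ≤ ENNReal.ofReal (2 * r) :=
  ediam_le_of_forall_dist_le fun y hy z hz ↦ by
    linarith [dist_triangle_right y z x, mem_closedBall.1 hy, mem_closedBall.1 hz]

section Lipschitz

variable {X Y : Type*} [EMetricSpace X] [EMetricSpace Y] [MeasurableSpace X] [BorelSpace X]
  [MeasurableSpace Y] [BorelSpace Y] {K : ℝ≥0} {g : X → Y}

lemma LipschitzWith.hausdorffMeasure_image_eq_zero (hg : LipschitzWith K g) {d : ℝ} (hd : 0 ≤ d)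
    {s : Set X} (hs : μH[d] s = 0) : μH[d] (g '' s) = 0 :=
  le_antisymm ((hg.hausdorffMeasure_image_le hd s).trans (by simp [hs])) zero_le

lemma LipschitzWith.hausdorffMeasure_pos_of_image (hg : LipschitzWith K g) {d : ℝ} (hd : 0 ≤ d)
    {s : Set X} (hs : 0 < μH[d] (g '' s)) : 0 < μH[d] s :=
  pos_of_ne_zero fun h ↦ hs.ne' (hg.hausdorffMeasure_image_eq_zero hd h)

end Lipschitz

lemma LipschitzWith.hausdorffMeasure_image_setOf_not_differentiableAt_eq_zero {E F : Type*}
    [NormedAddCommGroup E] [NormedSpace ℝ E] [FiniteDimensional ℝ E] [MeasurableSpace E]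
    [BorelSpace E] [NormedAddCommGroup F] [NormedSpace ℝ F] [FiniteDimensional ℝ F]
    [MeasurableSpace F] [BorelSpace F] {g : E → F} {K : ℝ≥0} (hg : LipschitzWith K g) :
    μH[finrank ℝ E] (g '' {x | ¬DifferentiableAt ℝ g x}) = 0 :=
  hg.hausdorffMeasure_image_eq_zero (Nat.cast_nonneg _) (ae_iff.1 hg.ae_differentiableAt)

section BiLipschitz

lemma BiLipschitzOn.congr {X Y : Type*} [PseudoMetricSpace X] [PseudoMetricSpace Y]
    {f g : X → Y} {s : Set X} (h : BiLipschitzOn f s) (hfg : EqOn f g s) : BiLipschitzOn g s := by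
  obtain ⟨L, hL, h⟩ := h
  exact ⟨L, hL, fun x hx y hy ↦ hfg hx ▸ hfg hy ▸ h x hx y hy⟩

lemma biLipschitzOn_of_lipschitzOnWith_of_antilipschitzWith {X Y : Type*} [PseudoMetricSpace X]
    [PseudoMetricSpace Y] {f : X → Y} {s : Set X} {K K' : ℝ≥0} (hf : LipschitzOnWith K f s)
    (hf' : AntilipschitzWith K' (s.domRestrict f)) : BiLipschitzOn f s := by
  refine ⟨max 1 (max K K'), le_max_left _ _, fun x hx y hy ↦ ⟨?_, ?_⟩⟩
  · rw [inv_mul_le_iff₀ (zero_lt_one.trans_le (le_max_left _ _))]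
    calc dist x y = dist (⟨x, hx⟩ : s) ⟨y, hy⟩ := rfl
      _ ≤ K' * dist (f x) (f y) := hf'.le_mul_dist _ _
      _ ≤ _ := by gcongr; exact le_max_of_le_right (le_max_right _ _)
  · exact (hf.dist_le_mul x hx y hy).trans (by gcongr; exact le_max_of_le_right (le_max_left _ _))

variable {𝕜 E F : Type*} [NontriviallyNormedField 𝕜] [NormedAddCommGroup E] [NormedSpace 𝕜 E]
  [NormedAddCommGroup F] [NormedSpace 𝕜 F]

lemma ApproximatesLinearOn.antilipschitzWith_domRestrict {f : E → F} {A : E →L[𝕜] F} {s : Set E}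
    {c K : ℝ≥0} (hf : ApproximatesLinearOn f A s c) (hA : AntilipschitzWith K A) (hc : c < K⁻¹) :
    AntilipschitzWith (K⁻¹ - c)⁻¹ (s.domRestrict f) := by
  convert! (hA.domRestrict s).add_lipschitzWith hf.lipschitz_sub hc
  simp [domRestrict]

end BiLipschitz

theorem exists_biLipschitzOn_cover_of_hasFDerivWithinAt {E F : Type*} [NormedAddCommGroup E]
    [NormedSpace ℝ E] [FiniteDimensional ℝ E] [NormedAddCommGroup F] [NormedSpace ℝ F]
    [SecondCountableTopology F] {g : E → F} {K : ℝ≥0} {s : Set E} (hg : LipschitzOnWith K g s)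
    {g' : E → E →L[ℝ] F} (hg' : ∀ x ∈ s, HasFDerivWithinAt g (g' x) s x)
    (hinj : ∀ x ∈ s, Injective (g' x)) :
    ∃ t : ℕ → Set E, s ⊆ ⋃ i, t i ∧ ∀ i, BiLipschitzOn g (s ∩ t i) := by
  borelize E
  have hr : ∀ A : E →L[ℝ] F, ∃ r : ℝ≥0, r ≠ 0 ∧
      (Injective A → ∃ K', AntilipschitzWith K' A ∧ r < K'⁻¹) := by
    intro A
    by_cases hA : Injective A
    · obtain ⟨K', hK', hAK'⟩ := A.toLinearMap.injective_iff_antilipschitz.1 hA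
      exact ⟨K'⁻¹ / 2, by positivity, fun _ ↦ ⟨K', hAK', half_lt_self (by positivity)⟩⟩
    · exact ⟨1, one_ne_zero, fun h ↦ (hA h).elim⟩
  choose r hr0 hr using hr
  obtain ⟨t, A, -, -, hst, hgA, hAs⟩ :=
    exists_partition_approximatesLinearOn_of_hasFDerivWithinAt g s g' hg' r hr0
  refine ⟨t, hst, fun i ↦ ?_⟩
  rcases s.eq_empty_or_nonempty with rfl | hs
  · exact ⟨1, le_rfl, by simp [BiLipschitzWithOn]⟩
  obtain ⟨y, hy, hAy⟩ := hAs hs i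
  obtain ⟨K', hK', hrK'⟩ := hr (A i) (hAy ▸ hinj y hy)
  exact biLipschitzOn_of_lipschitzOnWith_of_antilipschitzWith (hg.mono inter_subset_left)
    ((hgA i).antilipschitzWith_domRestrict hK' hrK')

section GridCubes

variable {n : ℕ}

lemma EuclideanSpace.norm_le_sqrt_card_mul {x : EuclideanSpace ℝ (Fin n)} {a : ℝ}
    (h : ∀ i, |x i| ≤ a) : ‖x‖ ≤ √n * a := by
  rcases Nat.eq_zero_or_pos n with rfl | hn
  · simp [Subsingleton.elim x 0]
  have ha : 0 ≤ a := (abs_nonneg _).trans (h ⟨0, hn⟩)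
  calc ‖x‖ = √(∑ i, ‖x i‖ ^ 2) := EuclideanSpace.norm_eq x
    _ ≤ √(∑ _i : Fin n, a ^ 2) := by
      gcongr with i
      exact h i
    _ = √n * a := by simp [Real.sqrt_mul, ha]

def gridCube (ρ : ℝ) (z : Fin n → ℤ) : Set (EuclideanSpace ℝ (Fin n)) :=
  {x | ∀ i, x i ∈ Ico (ρ * z i) (ρ * (z i + 1))}

lemma gridCube_eq_preimage_pi (ρ : ℝ) (z : Fin n → ℤ) :
    gridCube ρ z = (MeasurableEquiv.toLp 2 (Fin n → ℝ)).symm ⁻¹'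
      univ.pi fun i ↦ Ico (ρ * z i) (ρ * (z i + 1)) := by
  ext x
  simp [gridCube]

lemma mem_gridCube_floor {ρ : ℝ} (hρ : 0 < ρ) (x : EuclideanSpace ℝ (Fin n)) :
    x ∈ gridCube ρ (fun i ↦ ⌊x i / ρ⌋) := fun i ↦ by
  constructor
  · rw [mul_comm, ← le_div_iff₀ hρ]
    exact Int.floor_le _
  · rw [mul_comm, ← div_lt_iff₀ hρ]
    exact Int.lt_floor_add_one _

lemma corner_mem_gridCube {ρ : ℝ} (hρ : 0 < ρ) (z : Fin n → ℤ) :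
    WithLp.toLp 2 (fun i ↦ ρ * z i) ∈ gridCube ρ z := fun i ↦ by
  simp [hρ]

lemma dist_le_of_mem_gridCube {ρ : ℝ} {z : Fin n → ℤ} {x y : EuclideanSpace ℝ (Fin n)}
    (hx : x ∈ gridCube ρ z) (hy : y ∈ gridCube ρ z) : dist x y ≤ √n * ρ := by
  rw [dist_eq_norm]
  refine EuclideanSpace.norm_le_sqrt_card_mul fun i ↦ ?_
  have := hx i
  have := hy i
  simp only [mem_Ico, PiLp.sub_apply] at *
  rw [abs_le]
  constructor <;> linarith

lemma measurableSet_gridCube (ρ : ℝ) (z : Fin n → ℤ) : MeasurableSet (gridCube ρ z) := by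
  rw [gridCube_eq_preimage_pi]
  exact (MeasurableSet.univ_pi fun i ↦ measurableSet_Ico).preimage (MeasurableEquiv.measurable _)

lemma volume_gridCube (ρ : ℝ) (z : Fin n → ℤ) :
    volume (gridCube ρ z) = ENNReal.ofReal ρ ^ n := by
  rw [gridCube_eq_preimage_pi,
    (EuclideanSpace.volume_preserving_symm_measurableEquiv_toLp _).measure_preimage
      (MeasurableSet.univ_pi fun i ↦ measurableSet_Ico).nullMeasurableSet, volume_pi_pi]
  simp [Real.volume_Ico, mul_add]

lemma pairwise_disjoint_gridCube {ρ : ℝ} (hρ : 0 < ρ) :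
    Pairwise (Disjoint on gridCube (n := n) ρ) := by
  intro z z' hzz'
  obtain ⟨i, hi⟩ := Function.ne_iff.1 hzz'
  rw [onFun, Set.disjoint_left]
  intro x hx hx'
  have h := hx i
  have h' := hx' i
  simp only [mem_Ico] at h h'
  rcases hi.lt_or_gt with hlt | hlt
  · have : (z i : ℝ) + 1 ≤ z' i := by exact_mod_cast hlt
    nlinarith
  · have : (z' i : ℝ) + 1 ≤ z i := by exact_mod_cast hlt
    nlinarith

lemma encard_setOf_gridCube_inter_nonempty_mul_le (K : Set (EuclideanSpace ℝ (Fin n)))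
    {ρ r : ℝ} (hρ : 0 < ρ) (hρr : √n * ρ < r) :
    {z | (gridCube ρ z ∩ K).Nonempty}.encard * ENNReal.ofReal ρ ^ n ≤
      volume (thickening r K) := by
  set Z := {z | (gridCube ρ z ∩ K).Nonempty}
  have hunion : volume (⋃ z ∈ Z, gridCube ρ z) = ∑' z : Z, volume (gridCube ρ (z : Fin n → ℤ)) :=
    measure_biUnion (to_countable Z) ((pairwise_disjoint_gridCube hρ).set_pairwise Z)
      fun z _ ↦ measurableSet_gridCube ρ z
  have hsub : ⋃ z ∈ Z, gridCube ρ z ⊆ thickening r K := by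
    refine iUnion₂_subset fun z ⟨x, hxz, hxK⟩ y hy ↦ ?_
    exact mem_thickening_iff.2 ⟨x, hxK, (dist_le_of_mem_gridCube hy hxz).trans_lt hρr⟩
  calc Z.encard * ENNReal.ofReal ρ ^ n = ∑' z : Z, volume (gridCube ρ (z : Fin n → ℤ)) := by
        simp only [volume_gridCube, ENNReal.tsum_set_const]
    _ ≤ volume (thickening r K) := hunion ▸ measure_mono hsub

end GridCubes

def intBox (k N : ℕ) : Finset (Fin k → ℤ) :=
  Fintype.piFinset fun _ ↦ Finset.Icc (-(N : ℤ)) N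

lemma card_intBox (k N : ℕ) : (intBox k N).card = (2 * N + 1) ^ k := by
  simp only [intBox, Fintype.card_piFinset, Int.card_Icc, Finset.prod_const, Finset.card_univ,
    Fintype.card_fin]
  congr 1
  omega

lemma exists_mem_intBox_dist_le {k N : ℕ} {s : ℝ} (hs : 0 < s) {y : EuclideanSpace ℝ (Fin k)}
    (hy : ‖y‖ ≤ N * s) :
    ∃ w ∈ intBox k N, dist y (WithLp.toLp 2 fun i ↦ s * w i) ≤ √k * s := by
  refine ⟨fun i ↦ ⌊y i / s⌋, Fintype.mem_piFinset.2 fun i ↦ ?_,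
    dist_le_of_mem_gridCube (mem_gridCube_floor hs y) (corner_mem_gridCube hs _)⟩
  have hyi : |y i / s| ≤ N := by
    rw [abs_div, abs_of_pos hs, div_le_iff₀ hs]
    exact (PiLp.norm_apply_le y i).trans hy
  rw [abs_le] at hyi
  rw [Finset.mem_Icc]
  constructor
  · exact Int.le_floor.2 (by push_cast; exact hyi.1)
  · exact (Int.cast_le (R := ℝ)).1 (by push_cast; exact (Int.floor_le _).trans hyi.2)

lemma tsum_gridCube_inter_nonempty_prod_intBox_le {n : ℕ} (K : Set (EuclideanSpace ℝ (Fin n)))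
    {ρ r a : ℝ} (hρ : 0 < ρ) (hρr : √n * ρ < r) (ha : 0 ≤ a) (k N : ℕ) :
    ∑' _ : ↥({z | (gridCube ρ z ∩ K).Nonempty} ×ˢ (intBox k N : Set (Fin k → ℤ))),
      ENNReal.ofReal (a * ρ) ^ n ≤
        ENNReal.ofReal (((2 * N + 1) ^ k : ℕ) * a ^ n) * volume (thickening r K) := by
  have hD : ENNReal.ofReal (a * ρ) ^ n = ENNReal.ofReal ρ ^ n * ENNReal.ofReal (a ^ n) := by
    rw [← ENNReal.ofReal_pow (mul_nonneg ha hρ.le), mul_pow, ENNReal.ofReal_mul (by positivity),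
      ENNReal.ofReal_pow ha, ENNReal.ofReal_pow hρ.le, mul_comm]
  rw [ENNReal.tsum_set_const, encard_prod, encard_coe_eq_coe_finsetCard, card_intBox, hD,
    ENNReal.ofReal_mul (Nat.cast_nonneg _), ENNReal.ofReal_natCast]
  push_cast
  calc _ = (2 * N + 1) ^ k * ENNReal.ofReal (a ^ n) *
        ({z | (gridCube ρ z ∩ K).Nonempty}.encard * ENNReal.ofReal ρ ^ n) := by ring
    _ ≤ _ := by gcongr; exact encard_setOf_gridCube_inter_nonempty_mul_le K hρ hρr

section Sard

variable {n : ℕ} {F : Type*} [NormedAddCommGroup F] [InnerProductSpace ℝ F]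

lemma image_gridCube_inter_subset {g : EuclideanSpace ℝ (Fin n) → F}
    {A : EuclideanSpace ℝ (Fin n) →L[ℝ] F} {K : Set (EuclideanSpace ℝ (Fin n))} {δ : ℝ≥0}
    (hg : ApproximatesLinearOn g A K δ) (hδ : 0 < δ) {M : ℝ} (hA : ‖A‖ ≤ M) {ρ : ℝ} (hρ : 0 < ρ)
    {z : Fin n → ℤ} {p : EuclideanSpace ℝ (Fin n)} (hp : p ∈ gridCube ρ z ∩ K) :
    g '' (gridCube ρ z ∩ K) ⊆
      ⋃ w ∈ intBox (finrank ℝ (LinearMap.range A.toLinearMap)) ⌈M * √n / δ⌉₊,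
        closedBall (g p + ((stdOrthonormalBasis ℝ (LinearMap.range A.toLinearMap)).repr.symm
          (WithLp.toLp 2 fun i ↦ δ * ρ * w i) : F)) (2 * √n * δ * ρ) := by
  rintro _ ⟨x, hx, rfl⟩
  set b := stdOrthonormalBasis ℝ (LinearMap.range A.toLinearMap)
  have hxp : ‖x - p‖ ≤ √n * ρ := dist_eq_norm x p ▸ dist_le_of_mem_gridCube hx.1 hp.1
  set v : LinearMap.range A.toLinearMap := ⟨A (x - p), LinearMap.mem_range_self _ _⟩
  have hv : ‖b.repr v‖ ≤ ⌈M * √n / δ⌉₊ * (δ * ρ) := by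
    rw [LinearIsometryEquiv.norm_map, Submodule.coe_norm]
    calc ‖A (x - p)‖ ≤ M * (√n * ρ) :=
          A.le_of_opNorm_le hA _ |>.trans (by gcongr; exact (norm_nonneg A).trans hA)
      _ = M * √n / δ * (δ * ρ) := by field_simp
      _ ≤ ⌈M * √n / δ⌉₊ * (δ * ρ) := by gcongr; exact Nat.le_ceil _
  obtain ⟨w, hw, hvw⟩ := exists_mem_intBox_dist_le (by positivity) hv
  refine mem_iUnion₂.2 ⟨w, hw, mem_closedBall.2 ?_⟩
  have hk : √(finrank ℝ (LinearMap.range A.toLinearMap) : ℝ) ≤ √n := by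
    gcongr
    simpa using A.toLinearMap.finrank_range_le
  have hlin : ‖A (x - p) - (b.repr.symm (WithLp.toLp 2 fun i ↦ δ * ρ * w i) : F)‖ ≤
      √(finrank ℝ (LinearMap.range A.toLinearMap) : ℝ) * (δ * ρ) := by
    refine le_of_eq_of_le ?_ hvw
    rw [dist_eq_norm, ← b.repr.symm.norm_map, map_sub b.repr.symm,
      LinearIsometryEquiv.symm_apply_apply]
    rfl
  calc dist (g x) (g p + (b.repr.symm (WithLp.toLp 2 fun i ↦ δ * ρ * w i) : F))
      = ‖(g x - g p - A (x - p)) +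
          (A (x - p) - b.repr.symm (WithLp.toLp 2 fun i ↦ δ * ρ * w i))‖ := by
        rw [dist_eq_norm]; congr 1; abel
    _ ≤ δ * ‖x - p‖ + √(finrank ℝ (LinearMap.range A.toLinearMap) : ℝ) * (δ * ρ) :=
        norm_add_le_of_le (hg x hx.2 p hp.2) hlin
    _ ≤ δ * (√n * ρ) + √n * (δ * ρ) := by gcongr
    _ = 2 * √n * δ * ρ := by ring

variable [MeasurableSpace F] [BorelSpace F]

theorem hausdorffMeasure_image_le_of_approximatesLinearOn_of_thickening
    {g : EuclideanSpace ℝ (Fin n) → F} {A : EuclideanSpace ℝ (Fin n) →L[ℝ] F}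
    {K : Set (EuclideanSpace ℝ (Fin n))} {δ : ℝ≥0} (hg : ApproximatesLinearOn g A K δ)
    (hA : ¬Injective A) {M : ℝ} (hAM : ‖A‖ ≤ M) (hδ : 0 < δ) (hδ1 : δ ≤ 1) {r : ℝ} (hr : 0 < r) :
    μH[n] (g '' K) ≤
      ENNReal.ofReal (((2 * (M * √n) + 3) * (4 * √n)) ^ n * δ) * volume (thickening r K) := by
  set k := finrank ℝ (LinearMap.range A.toLinearMap)
  set b := stdOrthonormalBasis ℝ (LinearMap.range A.toLinearMap)
  set N := ⌈M * √n / δ⌉₊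
  set Z : ℝ → Set (Fin n → ℤ) := fun ρ ↦ {z | (gridCube ρ z ∩ K).Nonempty}
  -- a cube `z` meeting `K` and a lattice point `w` of mesh `δρ` in `range A` give the centre
  -- `g p + w`, with `p` a point of `K` in the cube
  set c : ∀ ρ, ↥(Z ρ ×ˢ (intBox k N : Set (Fin k → ℤ))) → F := fun ρ q ↦
    g (mem_prod.1 q.2).1.some + b.repr.symm (WithLp.toLp 2 fun i ↦ δ * ρ * q.1.2 i)
  have hdiam : ∀ ρ q, ediam (closedBall (c ρ q) (2 * √n * δ * ρ)) ≤
      ENNReal.ofReal (4 * √n * δ * ρ) := fun ρ q ↦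
    (Metric.ediam_closedBall_le _ _).trans_eq (by ring_nf)
  refine hausdorffMeasure_le_of_forall_cover _ (4 * √n * δ)
    (fun ρ q ↦ closedBall (c ρ q) (2 * √n * δ * ρ)) (fun ρ _ q ↦ hdiam ρ q) (fun ρ hρ ↦ ?_) ?_
  · rintro _ ⟨x, hx, rfl⟩
    have hz : (fun i ↦ ⌊x i / ρ⌋) ∈ Z ρ := ⟨x, mem_gridCube_floor hρ x, hx⟩
    obtain ⟨w, hw, hxw⟩ := mem_iUnion₂.1 <| image_gridCube_inter_subset hg hδ hAM hρ hz.some_mem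
      ⟨x, ⟨mem_gridCube_floor hρ x, hx⟩, rfl⟩
    exact mem_iUnion.2 ⟨⟨(_, w), hz, hw⟩, hxw⟩
  have hsmall : ∀ᶠ ρ in 𝓝[>] (0 : ℝ), √n * ρ < r :=
    (((continuous_const_mul _).tendsto' 0 0 (mul_zero _)).mono_left nhdsWithin_le_nhds).eventually
      (gt_mem_nhds hr)
  filter_upwards [self_mem_nhdsWithin, hsmall] with ρ (hρ : 0 < ρ) hρr
  have hkn : k < n := by
    simpa using LinearMap.finrank_range_lt_of_not_injective (A := A.toLinearMap) hA
  calc ∑' q, ediam (closedBall (c ρ q) (2 * √n * δ * ρ)) ^ (n : ℝ)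
      ≤ ∑' _ : ↥(Z ρ ×ˢ (intBox k N : Set (Fin k → ℤ))), ENNReal.ofReal (4 * √n * δ * ρ) ^ n :=
        ENNReal.tsum_le_tsum fun q ↦ by
          rw [← ENNReal.rpow_natCast]
          gcongr
          exact hdiam ρ q
    _ ≤ ENNReal.ofReal (((2 * N + 1) ^ k : ℕ) * (4 * √n * δ) ^ n) * volume (thickening r K) :=
        tsum_gridCube_inter_nonempty_prod_intBox_le K hρ hρr (by positivity) k N
    _ ≤ _ := mul_le_mul' (ENNReal.ofReal_le_ofReal <| natCast_two_mul_ceil_add_one_pow_mul_pow_le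
          (mul_nonneg ((norm_nonneg A).trans hAM) (Real.sqrt_nonneg n)) (by positivity) hδ hδ1 hkn)
          le_rfl

theorem hausdorffMeasure_image_le_of_approximatesLinearOn_of_isOpen
    {g : EuclideanSpace ℝ (Fin n) → F} {A : EuclideanSpace ℝ (Fin n) →L[ℝ] F}
    {X U : Set (EuclideanSpace ℝ (Fin n))} {δ : ℝ≥0} (hg : ApproximatesLinearOn g A X δ)
    (hA : ¬Injective A) {M : ℝ} (hAM : ‖A‖ ≤ M) (hδ : 0 < δ) (hδ1 : δ ≤ 1) (hU : IsOpen U)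
    (hXU : X ⊆ U) :
    μH[n] (g '' X) ≤ ENNReal.ofReal (((2 * (M * √n) + 3) * (4 * √n)) ^ n * δ) * volume U := by
  set Y : ℕ → Set (EuclideanSpace ℝ (Fin n)) := fun j ↦ {x ∈ X | ball x (1 / (j + 1)) ⊆ U}
  have hY : Monotone Y := fun i j hij x hx ↦
    ⟨hx.1, (ball_subset_ball (one_div_le_one_div_of_le (by positivity) (by gcongr))).trans hx.2⟩
  have hXY : X = ⋃ j, Y j := by
    refine Subset.antisymm (fun x hx ↦ ?_) (iUnion_subset fun j ↦ sep_subset _ _)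
    obtain ⟨ε, hε, hxU⟩ := Metric.isOpen_iff.1 hU x (hXU hx)
    obtain ⟨j, hj⟩ := exists_nat_one_div_lt hε
    exact mem_iUnion.2 ⟨j, hx, (ball_subset_ball hj.le).trans hxU⟩
  have hYU : ∀ j : ℕ, thickening (1 / (j + 1)) (Y j) ⊆ U := fun j ↦ by
    rw [thickening_eq_biUnion_ball]
    exact iUnion₂_subset fun x hx ↦ hx.2
  have hgY : Monotone fun j ↦ g '' Y j := fun i j hij ↦ image_mono (hY hij)
  rw [hXY, image_iUnion, hgY.measure_iUnion]
  refine iSup_le fun j ↦ ?_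
  calc μH[n] (g '' Y j)
      ≤ ENNReal.ofReal (((2 * (M * √n) + 3) * (4 * √n)) ^ n * δ) *
          volume (thickening (1 / (j + 1)) (Y j)) :=
        hausdorffMeasure_image_le_of_approximatesLinearOn_of_thickening
          (hg.mono_set (sep_subset _ _)) hA hAM hδ hδ1 (by positivity)
    _ ≤ _ := by gcongr; exact hYU j

theorem hausdorffMeasure_image_le_of_approximatesLinearOn
    {g : EuclideanSpace ℝ (Fin n) → F} {A : EuclideanSpace ℝ (Fin n) →L[ℝ] F}
    {X : Set (EuclideanSpace ℝ (Fin n))} {δ : ℝ≥0} (hg : ApproximatesLinearOn g A X δ)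
    (hA : ¬Injective A) {M : ℝ} (hAM : ‖A‖ ≤ M) (hδ : 0 < δ) (hδ1 : δ ≤ 1) :
    μH[n] (g '' X) ≤ ENNReal.ofReal (((2 * (M * √n) + 3) * (4 * √n)) ^ n * δ) * volume X := by
  set C := ENNReal.ofReal (((2 * (M * √n) + 3) * (4 * √n)) ^ n * δ)
  have : (C • volume : Measure (EuclideanSpace ℝ (Fin n))).OuterRegular :=
    Measure.OuterRegular.smul _ ENNReal.ofReal_ne_top
  calc μH[n] (g '' X) ≤ ⨅ (U) (_ : X ⊆ U) (_ : IsOpen U), (C • volume) U :=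
        le_iInf₂ fun U hXU ↦ le_iInf fun hU ↦
          hausdorffMeasure_image_le_of_approximatesLinearOn_of_isOpen hg hA hAM hδ hδ1 hU hXU
    _ = C * volume X := (X.measure_eq_iInf_isOpen _).symm

theorem hausdorffMeasure_image_inter_setOf_not_injective_fderiv_eq_zero [CompleteSpace F]
    [SecondCountableTopology F] {g : EuclideanSpace ℝ (Fin n) → F} {L : ℝ≥0}
    (hg : LipschitzWith L g) {s : Set (EuclideanSpace ℝ (Fin n))} (hs : MeasurableSet s)
    (hs' : volume s ≠ ∞) :
    μH[n] (g '' (s ∩ {x | DifferentiableAt ℝ g x ∧ ¬Injective (fderiv ℝ g x)})) = 0 := by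
  set B := s ∩ {x | DifferentiableAt ℝ g x ∧ ¬Injective (fderiv ℝ g x)}
  have hB : MeasurableSet B := hs.inter <| (measurableSet_of_differentiableAt ℝ g).inter <|
    ContinuousLinearMap.isOpen_injective.measurableSet.compl.preimage (measurable_fderiv ℝ g)
  rcases B.eq_empty_or_nonempty with hBe | hBne
  · simp [hBe]
  set C := ((2 * (L * √n) + 3) * (4 * √n)) ^ n
  have hbound : ∀ δ : ℝ≥0, 0 < δ → δ ≤ 1 →
      μH[n] (g '' B) ≤ ENNReal.ofReal (C * δ) * volume s := by
    intro δ hδ hδ1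
    obtain ⟨t, A, htd, htm, hBt, hgA, hAB⟩ :=
      exists_partition_approximatesLinearOn_of_hasFDerivWithinAt g B (fderiv ℝ g)
        (fun x hx ↦ hx.2.1.hasFDerivAt.hasFDerivWithinAt) (fun _ ↦ δ) (fun _ ↦ hδ.ne')
    calc μH[n] (g '' B) ≤ ∑' i, μH[n] (g '' (B ∩ t i)) :=
          measure_image_le_tsum_measure_image_inter _ g hBt
      _ ≤ ∑' i, ENNReal.ofReal (C * δ) * volume (B ∩ t i) := ENNReal.tsum_le_tsum fun i ↦ by
          obtain ⟨y, hy, hAy⟩ := hAB hBne i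
          exact hausdorffMeasure_image_le_of_approximatesLinearOn (hgA i) (hAy ▸ hy.2.2)
            (hAy ▸ norm_fderiv_le_of_lipschitz ℝ hg) hδ hδ1
      _ = ENNReal.ofReal (C * δ) * volume (⋃ i, B ∩ t i) := by
          rw [ENNReal.tsum_mul_left, measure_iUnion
            (fun i j hij ↦ (htd hij).mono inter_subset_right inter_subset_right)
            fun i ↦ hB.inter (htm i)]
      _ ≤ ENNReal.ofReal (C * δ) * volume s := by
          gcongr
          exact iUnion_subset fun i ↦ inter_subset_left.trans inter_subset_left
  have hlim : Tendsto (fun δ : ℝ≥0 ↦ ENNReal.ofReal (C * δ) * volume s) (𝓝[>] 0) (𝓝 0) := by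
    have h : Tendsto (fun δ : ℝ≥0 ↦ ENNReal.ofReal (C * δ)) (𝓝 0) (𝓝 0) := by
      simpa using ENNReal.tendsto_ofReal
        (((continuous_const_mul C).comp NNReal.continuous_coe).tendsto 0)
    simpa using (ENNReal.Tendsto.mul_const h (Or.inr hs')).mono_left nhdsWithin_le_nhds
  refine le_antisymm (ge_of_tendsto hlim ?_) zero_le
  filter_upwards [Ioo_mem_nhdsGT zero_lt_one] with δ hδ using hbound δ hδ.1 hδ.2.le

theorem hausdorffMeasure_image_setOf_not_injective_fderiv_eq_zero [CompleteSpace F]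
    [SecondCountableTopology F] {g : EuclideanSpace ℝ (Fin n) → F} {L : ℝ≥0}
    (hg : LipschitzWith L g) :
    μH[n] (g '' {x | DifferentiableAt ℝ g x ∧ ¬Injective (fderiv ℝ g x)}) = 0 := by
  refine measure_mono_null (t := ⋃ j : ℕ, g '' (closedBall 0 j ∩ _)) ?_ <| measure_iUnion_null
    fun j ↦ hausdorffMeasure_image_inter_setOf_not_injective_fderiv_eq_zero hg
      measurableSet_closedBall measure_closedBall_lt_top.ne
  rw [← image_iUnion, ← iUnion_inter, iUnion_closedBall_nat, univ_inter]

theorem hausdorffMeasure_image_inter_setOf_injective_fderiv [FiniteDimensional ℝ F]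
    {g : EuclideanSpace ℝ (Fin n) → F} {L : ℝ≥0} (hg : LipschitzWith L g)
    (s : Set (EuclideanSpace ℝ (Fin n))) :
    μH[n] (g '' (s ∩ {x | DifferentiableAt ℝ g x ∧ Injective (fderiv ℝ g x)})) =
      μH[n] (g '' s) := by
  refine le_antisymm (measure_mono (image_mono inter_subset_left)) ?_
  have hsplit : g '' s ⊆ g '' (s ∩ {x | DifferentiableAt ℝ g x ∧ Injective (fderiv ℝ g x)}) ∪
      g '' {x | ¬DifferentiableAt ℝ g x} ∪
      g '' {x | DifferentiableAt ℝ g x ∧ ¬Injective (fderiv ℝ g x)} := by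
    rintro _ ⟨x, hx, rfl⟩
    by_cases hd : DifferentiableAt ℝ g x
    · by_cases hi : Injective (fderiv ℝ g x)
      · exact Or.inl (Or.inl ⟨x, ⟨hx, hd, hi⟩, rfl⟩)
      · exact Or.inr ⟨x, ⟨hd, hi⟩, rfl⟩
    · exact Or.inl (Or.inr ⟨x, hd, rfl⟩)
  have hnd : μH[n] (g '' {x | ¬DifferentiableAt ℝ g x}) = 0 := by
    simpa using hg.hausdorffMeasure_image_setOf_not_differentiableAt_eq_zero
  calc μH[n] (g '' s) ≤ μH[n] (g '' (s ∩ {x | DifferentiableAt ℝ g x ∧ Injective (fderiv ℝ g x)})) +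
        μH[n] (g '' {x | ¬DifferentiableAt ℝ g x}) +
        μH[n] (g '' {x | DifferentiableAt ℝ g x ∧ ¬Injective (fderiv ℝ g x)}) :=
      (measure_mono hsplit).trans <|
        (measure_union_le _ _).trans (add_le_add_left (measure_union_le _ _) _)
    _ = _ := by
      rw [hnd, hausdorffMeasure_image_setOf_not_injective_fderiv_eq_zero hg, add_zero, add_zero]

end Sard

theorem statement0_general (n m : ℕ)
    (f : EuclideanSpace ℝ (Fin n) → EuclideanSpace ℝ (Fin m)) (L : ℝ≥0)
    (hf : LipschitzOnWith L f (unitCube n))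
    (him : 0 < μH[n] (f '' unitCube n)) :
    ∃ K : Set (EuclideanSpace ℝ (Fin n)),
      K ⊆ unitCube n ∧ 0 < μH[n] K ∧ BiLipschitzOn f K := by
  obtain ⟨g, hg, hfg⟩ := hf.extend_finite_dimension
  set G := unitCube n ∩ {x | DifferentiableAt ℝ g x ∧ Injective (fderiv ℝ g x)}
  have hG : 0 < μH[n] (g '' G) := by
    rwa [hausdorffMeasure_image_inter_setOf_injective_fderiv hg, ← hfg.image_eq]
  obtain ⟨t, hGt, hbi⟩ := exists_biLipschitzOn_cover_of_hasFDerivWithinAt (s := G)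
    hg.lipschitzOnWith (fun x hx ↦ hx.2.1.hasFDerivAt.hasFDerivWithinAt) (fun x hx ↦ hx.2.2)
  obtain ⟨i, hi⟩ : ∃ i, 0 < μH[n] (g '' (G ∩ t i)) := by
    by_contra! h
    simpa [nonpos_iff_eq_zero.1 (h _)] using
      hG.trans_le (measure_image_le_tsum_measure_image_inter _ g hGt)
  have hGi : G ∩ t i ⊆ unitCube n := inter_subset_left.trans inter_subset_left
  exact ⟨G ∩ t i, hGi, hg.hausdorffMeasure_pos_of_image (Nat.cast_nonneg n) hi,
    (hbi i).congr (hfg.symm.mono hGi)⟩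

/-- David. If `f : [0,1]^n → ℝ^m` is Lipschitz and its image has positive
`n`-dimensional Hausdorff measure, then `f` is biLipschitz on a subset of the cube of
positive `n`-dimensional Hausdorff measure. -/
theorem statement0 (n m : ℕ) (hn : 0 < n) (hm : 0 < m)
    (f : EuclideanSpace ℝ (Fin n) → EuclideanSpace ℝ (Fin m)) (L : ℝ≥0)
    (hf : LipschitzOnWith L f (unitCube n))
    (him : 0 < μH[n] (f '' unitCube n)) :
    ∃ K : Set (EuclideanSpace ℝ (Fin n)),
      K ⊆ unitCube n ∧ 0 < μH[n] K ∧ BiLipschitzOn f K :=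
  statement0_general n m f L hf him
end
end

section
/- Let n, m be positive integers, let U ⊆ ℝ^n be a connected open set, let f : U → ℝ^m be Lipschitz, and let T : ℝ^n → ℝ^m be a linear map such that for Lebesgue-almost every x ∈ U, f is differentiable at x with total derivative equal to T. If x₀ ∈ U and f(x₀) = y₀, then f(x) = T(x − x₀) + y₀ for all x ∈ U. -/
open MeasureTheory Metric Set Filter
open scoped NNReal Topology

/-! `g := f - T` is Lipschitz on `U` with derivative zero almost everywhere. Fix a direction `v`.
By Fubini, for almost every `z` the line `t ↦ z + t • v` meets the exceptional null set in a null
set of parameters; along such a line `g` is Lipschitz, hence absolutely continuous, with zero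
derivative almost everywhere, so it is constant. Thus `g (z + v) = g z` for almost every `z` near
a point of `U`, hence for every such `z` by continuity: `g` is locally constant on `U`, hence
constant on the connected set `U`. -/

theorem IsPreconnected.apply_eq_of_eventually_eq {X Y : Type*} [TopologicalSpace X] {U : Set X}
    (hU : IsPreconnected U) {g : X → Y} (hg : ∀ x ∈ U, ∀ᶠ y in 𝓝 x, g y = g x) {x y : X}
    (hx : x ∈ U) (hy : y ∈ U) : g x = g y := by
  have := isPreconnected_iff_preconnectedSpace.mp hU
  have hloc : IsLocallyConstant fun z : U ↦ g z :=
    (IsLocallyConstant.iff_eventually_eq _).2 fun z ↦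
      continuous_subtype_val.continuousAt.eventually (hg z z.2)
  exact hloc.apply_eq_of_preconnectedSpace ⟨x, hx⟩ ⟨y, hy⟩

section

variable {E F : Type*} [NormedAddCommGroup E] [NormedSpace ℝ E]
  [NormedAddCommGroup F] [NormedSpace ℝ F]

theorem MeasureTheory.ae_ae_add_smul [MeasurableSpace E] [BorelSpace E] [FiniteDimensional ℝ E]
    {μ : Measure E} [μ.IsAddHaarMeasure] {p : E → Prop} (h : ∀ᵐ x ∂μ, p x) (v : E) :
    ∀ᵐ z ∂μ, ∀ᵐ t : ℝ, p (z + t • v) := by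
  obtain ⟨s, hs, hs_meas, hsp⟩ := h.exists_measurable_mem
  filter_upwards [(ae_ae_add_linearMap_mem_iff (LinearMap.toSpanSingleton ℝ E v) volume μ
    hs_meas).2 hs] with z hz
  filter_upwards [hz] with t ht using hsp _ ht

theorem LipschitzOnWith.eq_of_segment_subset_of_ae_hasFDerivAt_zero {g : E → F} {K : ℝ≥0}
    {U : Set E} {x y : E} (hg : LipschitzOnWith K g U) (hxy : segment ℝ x y ⊆ U)
    (hg' : ∀ᵐ t : ℝ, x + t • (y - x) ∈ U → HasFDerivAt g (0 : E →L[ℝ] F) (x + t • (y - x))) :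
    g x = g y := by
  set γ : ℝ → E := fun t ↦ x + t • (y - x)
  have hγU : MapsTo γ (uIcc 0 1) U := fun t ht ↦ hxy <| by
    rw [segment_eq_image']
    exact mem_image_of_mem γ (by rwa [uIcc_of_le zero_le_one] at ht)
  have hγ : LipschitzWith (0 + ‖ContinuousLinearMap.toSpanSingleton ℝ (y - x)‖₊) γ :=
    (LipschitzWith.const x).add (ContinuousLinearMap.toSpanSingleton ℝ (y - x)).lipschitz
  obtain ⟨C, hC⟩ := (hg.comp hγ.lipschitzOnWith hγU).absolutelyContinuousOnInterval
    |>.const_of_ae_hasDerivAt_zero <| by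
    filter_upwards [hg'] with t ht htI
    simpa using (ht (hγU htI)).comp_hasDerivAt t
      (((hasDerivAt_id t).smul_const (y - x)).const_add x)
  simpa [γ] using (hC 0 left_mem_uIcc).trans (hC 1 right_mem_uIcc).symm

variable [MeasurableSpace E] [BorelSpace E] [FiniteDimensional ℝ E] {μ : Measure E}
  [μ.IsAddHaarMeasure]

theorem LipschitzOnWith.eventually_eq_of_ae_hasFDerivAt_zero {g : E → F} {K : ℝ≥0} {U : Set E}
    (hU : IsOpen U) (hg : LipschitzOnWith K g U)
    (hg' : ∀ᵐ x ∂μ, x ∈ U → HasFDerivAt g (0 : E →L[ℝ] F) x) {x : E} (hx : x ∈ U) :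
    ∀ᶠ y in 𝓝 x, g y = g x := by
  obtain ⟨ε, hε, hball⟩ := Metric.isOpen_iff.mp hU x hx
  filter_upwards [ball_mem_nhds x (half_pos hε)] with y hy
  set v := y - x
  have hsegment : ∀ z ∈ ball x (ε / 2), segment ℝ z (z + v) ⊆ U := by
    intro z hz
    refine ((convex_ball x ε).segment_subset (ball_subset_ball (half_le_self hε.le) hz) ?_).trans
      hball
    rw [mem_ball] at hy hz ⊢
    calc dist (z + v) x ≤ dist z x + ‖v‖ := by
          simpa [dist_eq_norm, add_sub_right_comm] using norm_add_le (z - x) v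
      _ < ε / 2 + ε / 2 := add_lt_add hz (by rwa [← dist_eq_norm])
      _ = ε := add_halves ε
  have hae : ∀ᵐ z ∂μ, z ∈ ball x (ε / 2) → g (z + v) = g z := by
    filter_upwards [ae_ae_add_smul hg' v] with z hz hzx
    exact (hg.eq_of_segment_subset_of_ae_hasFDerivAt_zero (hsegment z hzx)
      (by simpa only [add_sub_cancel_left] using hz)).symm
  have hcont : ContinuousOn g (ball x (ε / 2)) :=
    hg.continuousOn.mono ((ball_subset_ball (half_le_self hε.le)).trans hball)
  have hcont_v : ContinuousOn (fun z ↦ g (z + v)) (ball x (ε / 2)) :=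
    hg.continuousOn.comp (continuous_add_const v).continuousOn
      fun z hz ↦ hsegment z hz (right_mem_segment ℝ z (z + v))
  have := Measure.eqOn_open_of_ae_eq ((ae_restrict_iff' measurableSet_ball).2 hae) isOpen_ball
    hcont_v hcont (mem_ball_self (half_pos hε))
  simpa [v] using this

theorem LipschitzOnWith.eq_apply_sub_add_of_ae_hasFDerivAt {f : E → F} {L : ℝ≥0} {U : Set E}
    (hU : IsOpen U) (hUc : IsPreconnected U) (hf : LipschitzOnWith L f U) (T : E →L[ℝ] F)
    (hT : ∀ᵐ x ∂μ, x ∈ U → HasFDerivAt f T x) {x₀ x : E} (hx₀ : x₀ ∈ U) (hx : x ∈ U) :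
    f x = T (x - x₀) + f x₀ := by
  have hg' : ∀ᵐ x ∂μ, x ∈ U → HasFDerivAt (f - ⇑T) (0 : E →L[ℝ] F) x := by
    filter_upwards [hT] with x hx hxU
    simpa using (hx hxU).sub T.hasFDerivAt
  have := hUc.apply_eq_of_eventually_eq (fun x hx ↦
    (hf.sub T.lipschitz.lipschitzOnWith).eventually_eq_of_ae_hasFDerivAt_zero hU hg' hx) hx hx₀
  simp only [sub_eq_iff_eq_add] at this
  rw [this, map_sub]
  abel

end

theorem statement7_general (n m : ℕ)
    (U : Set (EuclideanSpace ℝ (Fin n))) (hUopen : IsOpen U) (hUconn : IsConnected U)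
    (f : EuclideanSpace ℝ (Fin n) → EuclideanSpace ℝ (Fin m)) (L : ℝ≥0)
    (hf : LipschitzOnWith L f U)
    (T : EuclideanSpace ℝ (Fin n) →L[ℝ] EuclideanSpace ℝ (Fin m))
    (hT : ∀ᵐ x ∂(volume : Measure (EuclideanSpace ℝ (Fin n))), x ∈ U → HasFDerivAt f T x)
    (x₀ : EuclideanSpace ℝ (Fin n)) (hx₀ : x₀ ∈ U)
    (y₀ : EuclideanSpace ℝ (Fin m)) (hy₀ : f x₀ = y₀) :
    ∀ x ∈ U, f x = T (x - x₀) + y₀ := fun _ hx ↦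
  hy₀ ▸ hf.eq_apply_sub_add_of_ae_hasFDerivAt hUopen hUconn.isPreconnected T hT hx₀ hx

/-- A Lipschitz map on a connected open set `U ⊆ ℝ^n` whose total
derivative equals a fixed linear map `T` at Lebesgue-almost every point of `U` is affine:
if `f(x₀) = y₀` then `f(x) = T(x - x₀) + y₀` on `U`. -/
theorem statement7 (n m : ℕ) (hn : 0 < n) (hm : 0 < m)
    (U : Set (EuclideanSpace ℝ (Fin n))) (hUopen : IsOpen U) (hUconn : IsConnected U)
    (f : EuclideanSpace ℝ (Fin n) → EuclideanSpace ℝ (Fin m)) (L : ℝ≥0)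
    (hf : LipschitzOnWith L f U)
    (T : EuclideanSpace ℝ (Fin n) →L[ℝ] EuclideanSpace ℝ (Fin m))
    (hT : ∀ᵐ x ∂(volume : Measure (EuclideanSpace ℝ (Fin n))), x ∈ U → HasFDerivAt f T x)
    (x₀ : EuclideanSpace ℝ (Fin n)) (hx₀ : x₀ ∈ U)
    (y₀ : EuclideanSpace ℝ (Fin m)) (hy₀ : f x₀ = y₀) :
    ∀ x ∈ U, f x = T (x - x₀) + y₀ :=
  statement7_general n m U hUopen hUconn f L hf T hT x₀ hx₀ y₀ hy₀
end
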